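/- arXiv:1312.4769 — 3 statements merged into one kernel-verified Lean document; each statement's English description precedes it below -/
import Mathlib

section
/- Let x = (t,u) and y be d-admissible arcs and let j ∈ ℤ. Set k = (t − u + 1)/|d| and V_j = {t + j + i·d : i = 0, 1, …, k−1}. Then Ext^j(x,y) ≠ 0 if and only if, writing y = (x', y'), either (x' ∈ V_j and y' ≤ u + j) or (y' ∈ V_j and x' ≥ t − d − 1 + j). -/
/- The Hom-hammock `F⁺(x)` shifted by `j` is read off directly. For `F⁻(S x)` the only
point is that its `k` admissible lower endpoints `u - w - i·d` run through the same
arithmetic progression as `V_j`, traversed backwards: since `k·|d| = t - u + 1`, the last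
one, `u - w - (k - 1)·d`, equals `t`. -/

/- Combinatorial model of the triangulated category `T_w` generated by a `w`-spherical
object (`w ≤ -1`), via `d`-admissible arcs of the ∞-gon, where `d = w - 1`,
`|d| = 1 - w`, `|w| = -w`. -/

namespace SphericalArcs

/-- An arc is a pair of integers `(t, u)`. -/
abbrev Arc : Type := ℤ × ℤ

/-- `(t,u)` is a `d`-admissible arc: `t > u`, `t - u ≥ |d| - 1 = -w` and
`t - u ≡ -1 (mod |d|)`, i.e. `(1 - w) ∣ (t - u + 1)`. -/
def Adm (w : ℤ) (a : Arc) : Prop :=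
  a.2 < a.1 ∧ -w ≤ a.1 - a.2 ∧ (1 - w) ∣ (a.1 - a.2 + 1)

/-- `k(t,u) = (t - u + 1) / |d|`. -/
def kk (w : ℤ) (a : Arc) : ℤ := (a.1 - a.2 + 1) / (1 - w)

/-- `c ∈ F⁺(a)`: `c = (x,y)` is `d`-admissible, `x = a.1 + i·d` for some
`0 ≤ i ≤ k(a) - 1`, and `y ≤ a.2`. -/
def Fplus (w : ℤ) (a c : Arc) : Prop :=
  Adm w c ∧ (∃ i : ℤ, 0 ≤ i ∧ i ≤ kk w a - 1 ∧ c.1 = a.1 + i * (w - 1)) ∧ c.2 ≤ a.2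

/-- `c ∈ F⁻(a)`: `c = (x,y)` is `d`-admissible, `y = a.2 - i·d` for some
`0 ≤ i ≤ k(a) - 1`, and `x ≥ a.1`. -/
def Fminus (w : ℤ) (a c : Arc) : Prop :=
  Adm w c ∧ (∃ i : ℤ, 0 ≤ i ∧ i ≤ kk w a - 1 ∧ c.2 = a.2 - i * (w - 1)) ∧ a.1 ≤ c.1

/-- The Serre functor: `S(t,u) = (t - w, u - w)`. -/
def Serre (w : ℤ) (a : Arc) : Arc := (a.1 - w, a.2 - w)

/-- `Hom(a,c) ≠ 0` iff `c ∈ F⁺(a) ∪ F⁻(S(a))`. -/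
def HomNe (w : ℤ) (a c : Arc) : Prop := Fplus w a c ∨ Fminus w (Serre w a) c

/-- `Ext^j(a,b) ≠ 0` iff `Hom(a, Σ^j b) ≠ 0`, where `Σ^j b = (b.1 - j, b.2 - j)`. -/
def ExtNe (w : ℤ) (j : ℤ) (a b : Arc) : Prop := HomNe w a (b.1 - j, b.2 - j)

/-- Two arcs `(t,u)` and `(t',u')` cross if `u < u' < t < t'` or `u' < u < t' < t`. -/
def Cross (a b : Arc) : Prop :=
  (a.2 < b.2 ∧ b.2 < a.1 ∧ a.1 < b.1) ∨ (b.2 < a.2 ∧ a.2 < b.1 ∧ b.1 < a.1)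

/-- Two arcs share a vertex if `{t,u} ∩ {t',u'} ≠ ∅`. -/
def ShareVertex (a b : Arc) : Prop :=
  a.1 = b.1 ∨ a.1 = b.2 ∨ a.2 = b.1 ∨ a.2 = b.2

/-- A `|w|`-Hom-configuration: a set `H` of `d`-admissible arcs such that a
`d`-admissible arc `h` belongs to `H` iff `Ext^i(x,h) = 0` for every `x ∈ H` and
`i ∈ {w+1, …, -1}`, and `Ext^i(x,h) = 0` for every `x ∈ H \ {h}` and `i ∈ {0, w}`. -/
def IsHomConfig (w : ℤ) (H : Set Arc) : Prop :=
  (∀ h ∈ H, Adm w h) ∧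
  ∀ h : Arc, Adm w h →
    (h ∈ H ↔
      (∀ x ∈ H, ∀ i : ℤ, w + 1 ≤ i → i ≤ -1 → ¬ ExtNe w i x h) ∧
      (∀ x ∈ H, x ≠ h → ¬ ExtNe w 0 x h ∧ ¬ ExtNe w w x h))

/-- `v` is an isolated vertex of `H`: it is not an endpoint of any arc of `H`. -/
def Isolated (H : Set Arc) (v : ℤ) : Prop := ∀ a ∈ H, a.1 ≠ v ∧ a.2 ≠ v

/-- `a ∈ H` is an overarc of `v`: `a.2 < v < a.1`. -/
def IsOverarc (H : Set Arc) (a : Arc) (v : ℤ) : Prop := a ∈ H ∧ a.2 < v ∧ v < a.1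

/-- `a` is the smallest overarc of `v` in `H`. -/
def IsSmallestOverarc (H : Set Arc) (a : Arc) (v : ℤ) : Prop :=
  IsOverarc H a v ∧ ∀ b : Arc, IsOverarc H b v → b.2 ≤ a.2 ∧ a.1 ≤ b.1

/-- The set of isolated vertices of `H` having no overarc in `H`. -/
def NoOverarcIsolated (H : Set Arc) : Set ℤ :=
  {v | Isolated H v ∧ ∀ a : Arc, ¬ IsOverarc H a v}

/-- A left `|w|`-Riedtmann configuration. -/
def IsLeftRiedtmann (w : ℤ) (C : Set Arc) : Prop :=
  (∀ c ∈ C, Adm w c) ∧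
  (∀ x ∈ C, ∀ y ∈ C, x ≠ y → ∀ i : ℤ, w ≤ i → i ≤ 0 → ¬ ExtNe w i x y) ∧
  ∀ z : Arc, Adm w z → ∃ x ∈ C, ∃ i : ℤ, w + 1 ≤ i ∧ i ≤ 0 ∧ ExtNe w i x z

/-- A right `|w|`-Riedtmann configuration. -/
def IsRightRiedtmann (w : ℤ) (C : Set Arc) : Prop :=
  (∀ c ∈ C, Adm w c) ∧
  (∀ x ∈ C, ∀ y ∈ C, x ≠ y → ∀ i : ℤ, w ≤ i → i ≤ 0 → ¬ ExtNe w i x y) ∧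
  ∀ z : Arc, Adm w z → ∃ x ∈ C, ∃ i : ℤ, w + 1 ≤ i ∧ i ≤ 0 ∧ ExtNe w i z x

theorem exists_progression_rev (a s n v : ℤ) :
    (∃ i : ℤ, 0 ≤ i ∧ i ≤ n ∧ v = a + n * s - i * s) ↔
      ∃ i : ℤ, 0 ≤ i ∧ i ≤ n ∧ v = a + i * s := by
  constructor <;> rintro ⟨i, hi₀, hin, rfl⟩ <;> exact ⟨n - i, by omega, by omega, by ring⟩

theorem adm_shift_iff {w : ℤ} {a : Arc} (j : ℤ) : Adm w (a.1 - j, a.2 - j) ↔ Adm w a := by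
  simp only [Adm, sub_sub_sub_cancel_right, sub_lt_sub_iff_right]

theorem kk_mul_eq {w : ℤ} {a : Arc} (ha : Adm w a) : kk w a * (1 - w) = a.1 - a.2 + 1 :=
  Int.ediv_mul_cancel ha.2.2

theorem kk_serre (w : ℤ) (a : Arc) : kk w (Serre w a) = kk w a := by
  simp only [kk, Serre, sub_sub_sub_cancel_right]

theorem fplus_shift_iff {w j : ℤ} {a c : Arc} (hc : Adm w c) :
    Fplus w a (c.1 - j, c.2 - j) ↔
      (∃ i : ℤ, 0 ≤ i ∧ i ≤ kk w a - 1 ∧ c.1 = a.1 + j + i * (w - 1)) ∧ c.2 ≤ a.2 + j := by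
  have hc' : Adm w (c.1 - j, c.2 - j) := (adm_shift_iff j).2 hc
  simp only [Fplus, hc', true_and]
  refine and_congr (exists_congr fun i => ?_) (by omega)
  constructor <;> rintro ⟨hi₀, hik, h⟩ <;> exact ⟨hi₀, hik, by linarith⟩

theorem fminus_serre_shift_iff {w j : ℤ} {a c : Arc} (ha : Adm w a) (hc : Adm w c) :
    Fminus w (Serre w a) (c.1 - j, c.2 - j) ↔
      (∃ i : ℤ, 0 ≤ i ∧ i ≤ kk w a - 1 ∧ c.2 = a.1 + j + i * (w - 1)) ∧
        a.1 - (w - 1) - 1 + j ≤ c.1 := by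
  have hc' : Adm w (c.1 - j, c.2 - j) := (adm_shift_iff j).2 hc
  have hk := kk_mul_eq ha
  simp only [Fminus, hc', kk_serre, true_and]
  simp only [Serre]
  rw [← exists_progression_rev]
  refine and_congr (exists_congr fun i => ?_) (by omega)
  constructor <;> rintro ⟨hi₀, hik, h⟩ <;> exact ⟨hi₀, hik, by linarith⟩

theorem stmt0_general (w : ℤ) (x y : Arc) (hx : Adm w x) (hy : Adm w y) (j : ℤ) :
    ExtNe w j x y ↔
      ((∃ i : ℤ, 0 ≤ i ∧ i ≤ kk w x - 1 ∧ y.1 = x.1 + j + i * (w - 1)) ∧ y.2 ≤ x.2 + j) ∨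
      ((∃ i : ℤ, 0 ≤ i ∧ i ≤ kk w x - 1 ∧ y.2 = x.1 + j + i * (w - 1)) ∧
        x.1 - (w - 1) - 1 + j ≤ y.1) :=
  or_congr (fplus_shift_iff hy) (fminus_serre_shift_iff hx hy)

/-- Lemma 2.3: `Ext^j(x,y) ≠ 0` iff, writing `y = (x', y')`, either `x' ∈ V_j` and
`y' ≤ u + j`, or `y' ∈ V_j` and `x' ≥ t - d - 1 + j`, where
`V_j = {t + j + i·d : i = 0, …, k - 1}`. -/
theorem stmt0 (w : ℤ) (hw : w ≤ -1) (x y : Arc) (hx : Adm w x) (hy : Adm w y) (j : ℤ) :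
    ExtNe w j x y ↔
      ((∃ i : ℤ, 0 ≤ i ∧ i ≤ kk w x - 1 ∧ y.1 = x.1 + j + i * (w - 1)) ∧ y.2 ≤ x.2 + j) ∨
      ((∃ i : ℤ, 0 ≤ i ∧ i ≤ kk w x - 1 ∧ y.2 = x.1 + j + i * (w - 1)) ∧
        x.1 - (w - 1) - 1 + j ≤ y.1) :=
  stmt0_general w x y hx hy j

end SphericalArcs
end

section
/- If w ≤ −2, then for every d-admissible arc x and every i ∈ {w+1, …, −1} one has Ext^i(x,x) = 0. -/
/-! Since `d = w - 1 < 0`, every arc of `F⁺(x)` has top endpoint at most that of `x`, and every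
arc of `F⁻(S x)` has bottom endpoint at least that of `S x`, i.e. `x.2 - w`. So the shifted arc
`Σ^i x = (x.1 - i, x.2 - i)` can only receive a morphism from `x` when `i ≥ 0` or `i ≤ w`. -/

/- Combinatorial model of the triangulated category `T_w` generated by a `w`-spherical
object (`w ≤ -1`), via `d`-admissible arcs of the ∞-gon, where `d = w - 1`,
`|d| = 1 - w`, `|w| = -w`. -/

namespace SphericalArcs

section

variable {w : ℤ} {a c : Arc}

theorem Fplus.fst_le (hw : w ≤ 1) (h : Fplus w a c) : c.1 ≤ a.1 := by
  obtain ⟨-, ⟨j, hj, -, hc⟩, -⟩ := h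
  have : j * (w - 1) ≤ 0 := mul_nonpos_of_nonneg_of_nonpos hj (by omega)
  omega

theorem Fminus.snd_ge (hw : w ≤ 1) (h : Fminus w a c) : a.2 ≤ c.2 := by
  obtain ⟨-, ⟨j, hj, -, hc⟩, -⟩ := h
  have : j * (w - 1) ≤ 0 := mul_nonpos_of_nonneg_of_nonpos hj (by omega)
  omega

theorem HomNe.fst_le_or_snd_ge (hw : w ≤ 1) (h : HomNe w a c) : c.1 ≤ a.1 ∨ a.2 - w ≤ c.2 :=
  h.imp (Fplus.fst_le hw) (Fminus.snd_ge hw)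

theorem ExtNe.self_nonneg_or_le (hw : w ≤ 1) {j : ℤ} (h : ExtNe w j a a) : 0 ≤ j ∨ j ≤ w := by
  rcases HomNe.fst_le_or_snd_ge hw h with h | h <;> dsimp only at h <;> omega

end

theorem stmt1_general (w : ℤ) (x : Arc)
    (i : ℤ) (hi1 : w + 1 ≤ i) (hi2 : i ≤ -1) :
    ¬ ExtNe w i x x := fun h => by
  rcases ExtNe.self_nonneg_or_le (by omega) h with h | h <;> omega

/-- Remark 2.4: if `w ≤ -2`, then for every `d`-admissible arc `x` and every
`i ∈ {w+1, …, -1}` one has `Ext^i(x,x) = 0`. -/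
theorem stmt1 (w : ℤ) (hw : w ≤ -2) (x : Arc) (hx : Adm w x)
    (i : ℤ) (hi1 : w + 1 ≤ i) (hi2 : i ≤ -1) :
    ¬ ExtNe w i x x :=
  stmt1_general w x i hi1 hi2

end SphericalArcs
end

section
/- Let H be a |w|-Hom-configuration and let (t,u) ∈ H. Then there are precisely |w| − 1 isolated vertices whose smallest overarc is (t,u). -/
lemma Int.add_le_of_dvd_sub {m p q : ℤ} (hqp : q < p) (hd : m ∣ p - q) : q + m ≤ p := by
  have := Int.le_of_dvd (sub_pos.2 hqp) hd
  omega

lemma Int.exists_bounded_eq_mul_iff {m k z : ℤ} (hm : 0 < m) :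
    (∃ i, 0 ≤ i ∧ i ≤ k - 1 ∧ z = i * m) ↔ 0 ≤ z ∧ z < k * m ∧ m ∣ z := by
  constructor
  · rintro ⟨i, hi0, hik, rfl⟩
    exact ⟨mul_nonneg hi0 hm.le, by nlinarith, dvd_mul_left m i⟩
  · rintro ⟨hz0, hzk, i, rfl⟩
    refine ⟨i, ?_, ?_, mul_comm m i⟩ <;> nlinarith

lemma Finset.filter_orderEmbOfFin_Ioo {α : Type*} [LinearOrder α] (S : Finset α)
    {k : ℕ} (hk : S.card = k) (i j : Fin k) :
    (S.filter fun x => S.orderEmbOfFin hk i < x ∧ x < S.orderEmbOfFin hk j) =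
      (Finset.Ioo i j).map (S.orderEmbOfFin hk).toEmbedding := by
  ext x
  simp only [Finset.mem_filter, Finset.mem_map, Finset.mem_Ioo,
    RelEmbedding.coe_toEmbedding]
  constructor
  · rintro ⟨hxS, hix, hxj⟩
    obtain ⟨l, rfl⟩ : x ∈ Set.range (S.orderEmbOfFin hk) := by
      rwa [Finset.range_orderEmbOfFin]
    exact ⟨l, ⟨(OrderEmbedding.lt_iff_lt _).1 hix, (OrderEmbedding.lt_iff_lt _).1 hxj⟩, rfl⟩
  · rintro ⟨l, ⟨hil, hlj⟩, rfl⟩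
    exact ⟨S.orderEmbOfFin_mem hk l, (S.orderEmbOfFin hk).strictMono hil,
      (S.orderEmbOfFin hk).strictMono hlj⟩

/-- `hwin` says that positions in `S` are congruent to ranks modulo `m`, so if `S` had `m`
elements, its first and `m`-th ones would be at distance `≡ -1 (mod m)`. -/
lemma Finset.card_lt_of_dvd_sub_card_between {m : ℤ} (hm : 2 ≤ m) (S : Finset ℤ)
    (hwin : ∀ v ∈ S, ∀ v' ∈ S, v < v' →
      m ∣ v' - v - 1 - (S.filter fun x => v < x ∧ x < v').card)
    (hgap : ∀ v ∈ S, ∀ v' ∈ S, v < v' → ¬ m ∣ v' - v + 1) : (S.card : ℤ) < m := by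
  by_contra! hSm
  lift m to ℕ using by omega
  set e := S.orderEmbOfFin rfl
  let i : Fin S.card := ⟨0, by omega⟩
  let j : Fin S.card := ⟨m - 1, by omega⟩
  have hij : e i < e j := e.strictMono (show i < j from Fin.mk_lt_mk.2 (by omega))
  have hcard : (S.filter fun x => e i < x ∧ x < e j).card = m - 2 := by
    rw [Finset.filter_orderEmbOfFin_Ioo, Finset.card_map, Fin.card_Ioo]
    simp only [i, j]
    omega
  have hmem : ∀ l, e l ∈ S := S.orderEmbOfFin_mem rfl
  have hdvd := hwin _ (hmem i) _ (hmem j) hij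
  rw [hcard] at hdvd
  refine hgap _ (hmem i) _ (hmem j) hij ?_
  have hm2 : e j - e i - 1 - ((m - 2 : ℕ) : ℤ) + m = e j - e i + 1 := by omega
  exact hm2 ▸ dvd_add hdvd dvd_rfl

namespace SphericalArcs

section ExtModel

variable {w i : ℤ} {x h c : Arc}

lemma Adm.of_sub_eq {a b : Arc} (ha : Adm w a) (hab : b.1 - b.2 = a.1 - a.2) : Adm w b := by
  obtain ⟨h1, h2, h3⟩ := ha
  exact ⟨by linarith, by linarith, by rwa [hab]⟩

lemma Adm.serre (hx : Adm w x) : Adm w (Serre w x) :=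
  hx.of_sub_eq (by simp [Serre])

lemma kk_mul (hx : Adm w x) : kk w x * (1 - w) = x.1 - x.2 + 1 :=
  Int.ediv_mul_cancel hx.2.2

lemma fplus_iff (hw : w ≤ -1) (hx : Adm w x) :
    Fplus w x c ↔ Adm w c ∧ (x.2 ≤ c.1 ∧ c.1 ≤ x.1 ∧ (1 - w) ∣ x.1 - c.1) ∧ c.2 ≤ x.2 := by
  have hidx : (∃ i, 0 ≤ i ∧ i ≤ kk w x - 1 ∧ c.1 = x.1 + i * (w - 1)) ↔
      ∃ i, 0 ≤ i ∧ i ≤ kk w x - 1 ∧ x.1 - c.1 = i * (1 - w) :=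
    exists_congr fun i => and_congr_right' <| and_congr_right' <| by
      constructor <;> intro <;> linarith
  rw [Fplus, hidx, Int.exists_bounded_eq_mul_iff (by omega), kk_mul hx]
  constructor <;> rintro ⟨hc, ⟨h1, h2, hd⟩, h3⟩ <;> exact ⟨hc, ⟨by omega, by omega, hd⟩, h3⟩

lemma fminus_iff (hw : w ≤ -1) (hx : Adm w x) :
    Fminus w x c ↔ Adm w c ∧ (x.2 ≤ c.2 ∧ c.2 ≤ x.1 ∧ (1 - w) ∣ c.2 - x.2) ∧ x.1 ≤ c.1 := by
  have hidx : (∃ i, 0 ≤ i ∧ i ≤ kk w x - 1 ∧ c.2 = x.2 - i * (w - 1)) ↔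
      ∃ i, 0 ≤ i ∧ i ≤ kk w x - 1 ∧ c.2 - x.2 = i * (1 - w) :=
    exists_congr fun i => and_congr_right' <| and_congr_right' <| by
      constructor <;> intro <;> linarith
  rw [Fminus, hidx, Int.exists_bounded_eq_mul_iff (by omega), kk_mul hx]
  constructor <;> rintro ⟨hc, ⟨h1, h2, hd⟩, h3⟩ <;> exact ⟨hc, ⟨by omega, by omega, hd⟩, h3⟩

lemma extNe_iff (hw : w ≤ -1) (hx : Adm w x) (hh : Adm w h) :
    ExtNe w i x h ↔
      (x.2 ≤ h.1 - i ∧ h.1 - i ≤ x.1 ∧ (1 - w) ∣ x.1 - (h.1 - i) ∧ h.2 - i ≤ x.2) ∨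
      (x.2 - w ≤ h.2 - i ∧ h.2 - i ≤ x.1 - w ∧ (1 - w) ∣ h.2 - i - (x.2 - w) ∧
        x.1 - w ≤ h.1 - i) := by
  have hc : Adm w (h.1 - i, h.2 - i) := hh.of_sub_eq (by simp)
  simp only [ExtNe, HomNe, fplus_iff hw hx, fminus_iff hw hx.serre]
  simp only [Serre, hc, true_and, and_assoc]

/-- The congruences sharpen the bounds of `extNe_iff` by `|d| - 1 = -w`, which absorbs the
shift `Σ^i`. -/
lemma ExtNe.bounds (hw : w ≤ -1) (hx : Adm w x) (hh : Adm w h) (hi : w ≤ i) (hi0 : i ≤ 0)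
    (hE : ExtNe w i x h) :
    (x.2 ≤ h.1 ∧ h.1 ≤ x.1 ∧ h.2 ≤ x.2) ∨ (x.2 ≤ h.2 ∧ h.2 ≤ x.1 ∧ x.1 ≤ h.1) := by
  rcases (extNe_iff hw hx hh).1 hE with ⟨h1, h2, hd, h3⟩ | ⟨h1, h2, hd, h3⟩
  · have := Int.add_le_of_dvd_sub (q := x.2 - 1) (p := h.1 - i) (by omega)
      (by convert Int.dvd_sub hx.2.2 hd using 1; ring)
    omega
  · have := Int.add_le_of_dvd_sub (q := h.2 - i) (p := x.1 - w + 1) (by omega)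
      (by convert Int.dvd_sub hx.2.2 hd using 1; ring)
    omega

/-- `Σ^i q` is the element of `F⁻(S p)` with the same lower end as `S p`. -/
lemma extNe_of_le_length (hw : w ≤ -1) {p q : Arc} (hp : Adm w p) (hq : Adm w q)
    (hi : q.2 - i = p.2 - w) (hlen : p.1 - p.2 ≤ q.1 - q.2) : ExtNe w i p q :=
  (extNe_iff hw hp hq).2 <| Or.inr ⟨by omega, by linarith [hp.2.1], by simp [hi], by omega⟩

def Separated (x h : Arc) : Prop :=
  h.1 < x.2 ∨ x.1 < h.2 ∨ (x.2 < h.2 ∧ h.1 < x.1) ∨ (h.2 < x.2 ∧ x.1 < h.1)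

lemma Separated.symm (hxh : Separated x h) : Separated h x := by
  unfold Separated at *
  omega

lemma Separated.not_extNe (hw : w ≤ -1) (hx : Adm w x) (hh : Adm w h) (hxh : Separated x h)
    (hi : w ≤ i) (hi0 : i ≤ 0) : ¬ ExtNe w i x h := fun hE => by
  have := ExtNe.bounds hw hx hh hi hi0 hE
  have := hx.1
  unfold Separated at hxh
  omega

lemma exists_extNe_of_not_separated (hw : w ≤ -1) (hx : Adm w x) (hh : Adm w h)
    (hxh : ¬ Separated x h) : ∃ i, w ≤ i ∧ i ≤ 0 ∧ (ExtNe w i x h ∨ ExtNe w i h x) := by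
  wlog hle : h.2 ≤ x.2 generalizing x h
  · obtain ⟨i, hi, hi0, hE⟩ := this hh hx (fun hs => hxh hs.symm) (by omega)
    exact ⟨i, hi, hi0, hE.symm⟩
  unfold Separated at hxh
  rcases le_or_gt h.1 x.1 with h1x1 | x1h1
  · set s := (x.1 - h.1) % (1 - w)
    have hs0 : 0 ≤ s := Int.emod_nonneg _ (by omega)
    have hsm : s < 1 - w := Int.emod_lt_of_pos _ (by omega)
    have hsd : (1 - w) ∣ x.1 - h.1 - s := Int.dvd_self_sub_emod
    have hsle : s ≤ x.1 - h.1 := by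
      have := mul_nonneg (by omega : (0 : ℤ) ≤ 1 - w) (Int.ediv_nonneg (by omega : 0 ≤ x.1 - h.1)
        (by omega : (0 : ℤ) ≤ 1 - w))
      linarith [Int.emod_def (x.1 - h.1) (1 - w)]
    by_cases hs : h.2 + s ≤ x.2
    · refine ⟨-s, by omega, by omega, Or.inl ((extNe_iff hw hx hh).2 (Or.inl ?_))⟩
      exact ⟨by omega, by omega, by convert hsd using 1; ring, by omega⟩
    · exact ⟨w + (x.2 - h.2), by omega, by omega,
        Or.inr (extNe_of_le_length hw hh hx (by ring) (by omega))⟩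
  · exact ⟨w, le_rfl, by omega, Or.inl (extNe_of_le_length hw hx hh (by omega) (by omega))⟩

end ExtModel

section Nesting

lemma injOn_fst {H : Set Arc} (hsep : H.Pairwise Separated) (hlt : ∀ b ∈ H, b.2 < b.1) :
    H.InjOn Prod.fst := by
  intro b hb c hc hbc
  by_contra hne
  have := hsep hb hc hne
  have := hlt b hb
  have := hlt c hc
  unfold Separated at *
  omega

lemma dvd_card_biUnion_Icc {m : ℤ} (s : Finset Arc) (hsep : (s : Set Arc).Pairwise Separated)
    (hlt : ∀ b ∈ s, b.2 < b.1) (hdvd : ∀ b ∈ s, m ∣ b.1 - b.2 + 1) :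
    m ∣ ((s.biUnion fun b => Finset.Icc b.2 b.1).card : ℤ) := by
  classical
  induction s using Finset.strongInduction with
  | H s ih =>
  obtain rfl | hne := s.eq_empty_or_nonempty
  · simp
  -- a longest arc `b`: every other arc is disjoint from it or nested in it
  obtain ⟨b, hb, hmax⟩ := s.exists_max_image (fun c => c.1 - c.2) hne
  set t := s.filter fun c => c.1 < b.2 ∨ b.1 < c.2
  have hts : t ⊂ s := Finset.filter_ssubset.2 ⟨b, hb, by have := hlt b hb; omega⟩
  have hunion : s.biUnion (fun c => Finset.Icc c.2 c.1) =
      Finset.Icc b.2 b.1 ∪ t.biUnion fun c => Finset.Icc c.2 c.1 := by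
    ext x
    simp only [Finset.mem_biUnion, Finset.mem_union, Finset.mem_Icc, t, Finset.mem_filter]
    constructor
    · rintro ⟨c, hc, hcx⟩
      obtain rfl | hcb := eq_or_ne c b
      · exact Or.inl hcx
      have hbc := hsep hb hc hcb.symm
      have := hmax c hc
      unfold Separated at hbc
      by_cases hct : c.1 < b.2 ∨ b.1 < c.2
      · exact Or.inr ⟨c, ⟨hc, hct⟩, hcx⟩
      · left; omega
    · rintro (hbx | ⟨c, ⟨hc, -⟩, hcx⟩)
      exacts [⟨b, hb, hbx⟩, ⟨c, hc, hcx⟩]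
  have hdisj : Disjoint (Finset.Icc b.2 b.1) (t.biUnion fun c => Finset.Icc c.2 c.1) := by
    rw [Finset.disjoint_biUnion_right]
    intro c hc
    rw [Finset.disjoint_left]
    intro x hbx hcx
    simp only [t, Finset.mem_filter] at hc
    rw [Finset.mem_Icc] at hbx hcx
    omega
  rw [hunion, Finset.card_union_of_disjoint hdisj, Int.card_Icc, Nat.cast_add,
    Int.toNat_of_nonneg (by linarith [hlt b hb])]
  refine dvd_add (by rw [add_sub_right_comm]; exact hdvd b hb) (ih t hts ?_ ?_ ?_)
  · exact hsep.mono (Finset.coe_subset.2 (Finset.filter_subset _ _))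
  · exact fun c hc => hlt c (Finset.mem_of_mem_filter c hc)
  · exact fun c hc => hdvd c (Finset.mem_of_mem_filter c hc)

def Covered (H : Set Arc) (a : Arc) (x : ℤ) : Prop :=
  ∃ b ∈ H, a.2 < b.2 ∧ b.1 < a.1 ∧ b.2 ≤ x ∧ x ≤ b.1

open Classical in
noncomputable def uncovered (H : Set Arc) (a : Arc) : Finset ℤ :=
  (Finset.Ioo a.2 a.1).filter fun v => ¬ Covered H a v

variable {H : Set Arc} {a : Arc}

lemma mem_uncovered {v : ℤ} : v ∈ uncovered H a ↔ (a.2 < v ∧ v < a.1) ∧ ¬ Covered H a v := by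
  simp [uncovered]

lemma not_covered_fst : ¬ Covered H a a.1 := by
  rintro ⟨b, -, -, hb, -, hab⟩
  omega

lemma not_covered_snd : ¬ Covered H a a.2 := by
  rintro ⟨b, hbH, hb, -, hba, -⟩
  omega

lemma coe_uncovered (hsep : H.Pairwise Separated) (hlt : ∀ b ∈ H, b.2 < b.1) (ha : a ∈ H) :
    (uncovered H a : Set ℤ) = {v | Isolated H v ∧ IsSmallestOverarc H a v} := by
  ext v
  simp only [Finset.mem_coe, mem_uncovered, Set.mem_ofPred_eq]
  constructor
  · rintro ⟨⟨hav, hva⟩, hcov⟩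
    have hplace : ∀ b ∈ H, b ≠ a → (b.1 < v ∨ v < b.2) ∨ (b.2 < a.2 ∧ a.1 < b.1) := by
      intro b hb hba
      have := hsep ha hb hba.symm
      have := hlt b hb
      have : ¬ (a.2 < b.2 ∧ b.1 < a.1 ∧ b.2 ≤ v ∧ v ≤ b.1) := fun h => hcov ⟨b, hb, h⟩
      unfold Separated at *
      omega
    refine ⟨fun b hb => ?_, ⟨ha, hav, hva⟩, fun b ⟨hb, hbv, hvb⟩ => ?_⟩
    · obtain rfl | hba := eq_or_ne b a
      · omega
      · have := hplace b hb hba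
        have := hlt b hb
        omega
    · obtain rfl | hba := eq_or_ne b a
      · omega
      · have := hplace b hb hba
        omega
  · rintro ⟨hiso, ⟨-, hav, hva⟩, hmin⟩
    refine ⟨⟨hav, hva⟩, ?_⟩
    rintro ⟨b, hb, hab, hba, hbv, hvb⟩
    have := hiso b hb
    have := (hmin b ⟨hb, by omega, by omega⟩).1
    omega

/-- Between two vertices not covered inside `a`, the covered ones form a disjoint union of
intervals `[b.2, b.1]`, one for each maximal arc of `H` between them. -/
lemma dvd_sub_card_uncovered_between (hsep : H.Pairwise Separated)
    (hlt : ∀ b ∈ H, b.2 < b.1) {m : ℤ} (hdvd : ∀ b ∈ H, m ∣ b.1 - b.2 + 1) {l r : ℤ}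
    (hlr : l < r) (hl : a.2 ≤ l) (hr : r ≤ a.1) (hlc : ¬ Covered H a l)
    (hrc : ¬ Covered H a r) :
    m ∣ r - l - 1 - ((uncovered H a).filter fun x => l < x ∧ x < r).card := by
  classical
  have hfin : {b ∈ H | l < b.2 ∧ b.1 < r}.Finite := by
    refine Set.Finite.of_finite_image ((Set.finite_Ioo l r).subset ?_)
      ((injOn_fst hsep hlt).mono fun b hb => hb.1)
    rintro _ ⟨b, ⟨hb, hlb, hbr⟩, rfl⟩
    exact ⟨by linarith [hlt b hb], hbr⟩
  have hcov : (Finset.Ioo l r).filter (Covered H a) =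
      hfin.toFinset.biUnion fun b => Finset.Icc b.2 b.1 := by
    ext x
    simp only [Finset.mem_filter, Finset.mem_Ioo, Finset.mem_biUnion, Set.Finite.mem_toFinset,
      Set.mem_ofPred_eq, Finset.mem_Icc, Covered]
    constructor
    · rintro ⟨⟨hlx, hxr⟩, b, hb, hab, hba, hbx, hxb⟩
      have : ¬ (b.2 ≤ l ∧ l ≤ b.1) := fun h => hlc ⟨b, hb, hab, hba, h⟩
      have : ¬ (b.2 ≤ r ∧ r ≤ b.1) := fun h => hrc ⟨b, hb, hab, hba, h⟩
      exact ⟨b, ⟨hb, by omega, by omega⟩, hbx, hxb⟩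
    · rintro ⟨b, ⟨hb, hlb, hbr⟩, hbx, hxb⟩
      exact ⟨⟨by omega, by omega⟩, b, hb, by omega, by omega, hbx, hxb⟩
  have hunc : (uncovered H a).filter (fun x => l < x ∧ x < r) =
      (Finset.Ioo l r).filter fun x => ¬ Covered H a x := by
    ext x
    simp only [Finset.mem_filter, mem_uncovered, Finset.mem_Ioo]
    constructor
    · rintro ⟨⟨-, hx⟩, hlxr⟩
      exact ⟨hlxr, hx⟩
    · rintro ⟨⟨hlx, hxr⟩, hx⟩
      exact ⟨⟨⟨by omega, by omega⟩, hx⟩, hlx, hxr⟩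
  have hsplit := Finset.card_filter_add_card_filter_not (s := Finset.Ioo l r) (Covered H a)
  rw [Int.card_Ioo, hcov] at hsplit
  have hcard := dvd_card_biUnion_Icc (m := m) hfin.toFinset
    (hsep.mono fun b hb => (hfin.mem_toFinset.1 hb).1)
    (fun b hb => hlt b (hfin.mem_toFinset.1 hb).1) (fun b hb => hdvd b (hfin.mem_toFinset.1 hb).1)
  rw [hunc]
  convert hcard using 1
  omega

lemma separated_of_mem_uncovered (hsep : H.Pairwise Separated) (hlt : ∀ b ∈ H, b.2 < b.1)
    (ha : a ∈ H) {v v' : ℤ} (hv : v ∈ uncovered H a)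
    (hv' : v' ∈ uncovered H a) (hvv' : v < v') {x : Arc} (hx : x ∈ H) :
    Separated x (v', v) := by
  rw [mem_uncovered] at hv hv'
  obtain rfl | hxa := eq_or_ne x a
  · unfold Separated
    omega
  have hax := hsep ha hx hxa.symm
  have := hlt x hx
  have : ¬ (a.2 < x.2 ∧ x.1 < a.1 ∧ x.2 ≤ v ∧ v ≤ x.1) := fun h => hv.2 ⟨x, hx, h⟩
  have : ¬ (a.2 < x.2 ∧ x.1 < a.1 ∧ x.2 ≤ v' ∧ v' ≤ x.1) := fun h => hv'.2 ⟨x, hx, h⟩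
  unfold Separated at hax ⊢
  omega

end Nesting

section HomConfig

variable {w : ℤ} {H : Set Arc}

lemma IsHomConfig.not_extNe (hH : IsHomConfig w H) {x h : Arc} (hx : x ∈ H) (hh : h ∈ H)
    (hne : x ≠ h) {i : ℤ} (hi : w ≤ i) (hi0 : i ≤ 0) : ¬ ExtNe w i x h := by
  obtain ⟨hmid, hends⟩ := (hH.2 h (hH.1 h hh)).1 hh
  rcases hi.eq_or_lt with rfl | hi
  · exact (hends x hx hne).2
  rcases hi0.eq_or_lt with rfl | hi0
  · exact (hends x hx hne).1
  exact hmid x hx i (by omega) (by omega)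

lemma IsHomConfig.pairwise_separated (hw : w ≤ -1) (hH : IsHomConfig w H) :
    H.Pairwise Separated := by
  intro x hx h hh hne
  by_contra hxh
  obtain ⟨i, hi, hi0, hE | hE⟩ :=
    exists_extNe_of_not_separated hw (hH.1 x hx) (hH.1 h hh) hxh
  · exact hH.not_extNe hx hh hne hi hi0 hE
  · exact hH.not_extNe hh hx hne.symm hi hi0 hE

lemma IsHomConfig.mem_of_forall_separated (hw : w ≤ -1) (hH : IsHomConfig w H) {z : Arc}
    (hz : Adm w z) (hsep : ∀ x ∈ H, Separated x z) : z ∈ H := by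
  refine (hH.2 z hz).2 ⟨fun x hx i hi hi0 => ?_, fun x hx _ => ⟨?_, ?_⟩⟩ <;>
    refine (hsep x hx).not_extNe hw (hH.1 x hx) hz ?_ ?_ <;> omega

lemma IsHomConfig.not_dvd_of_mem_uncovered (hw : w ≤ -1) (hH : IsHomConfig w H) {a : Arc}
    (ha : a ∈ H) {v v' : ℤ} (hv : v ∈ uncovered H a) (hv' : v' ∈ uncovered H a) (hvv' : v < v') :
    ¬ (1 - w) ∣ v' - v + 1 := by
  intro hd
  have hsep := hH.pairwise_separated hw
  have hlt : ∀ b ∈ H, b.2 < b.1 := fun b hb => (hH.1 b hb).1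
  have hz : Adm w (v', v) := ⟨hvv', by have := Int.le_of_dvd (by omega) hd; dsimp; omega, hd⟩
  have hzH : (v', v) ∈ H := hH.mem_of_forall_separated hw hz fun x hx =>
    separated_of_mem_uncovered hsep hlt ha hv hv' hvv' hx
  have hiso : Isolated H v' := by
    have := coe_uncovered hsep hlt ha ▸ Finset.mem_coe.2 hv'
    exact this.1
  exact (hiso _ hzH).1 rfl

end HomConfig

/-- Lemma 3.2: if `H` is a `|w|`-Hom-configuration and `(t,u) ∈ H`, then there are
precisely `|w| - 1` isolated vertices whose smallest overarc is `(t,u)`. -/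
theorem stmt3 (w : ℤ) (hw : w ≤ -1) (H : Set Arc) (hH : IsHomConfig w H)
    (a : Arc) (ha : a ∈ H) :
    {v : ℤ | Isolated H v ∧ IsSmallestOverarc H a v}.Finite ∧
    ({v : ℤ | Isolated H v ∧ IsSmallestOverarc H a v}.ncard : ℤ) = -w - 1 := by
  have hsep := hH.pairwise_separated hw
  have hlt : ∀ b ∈ H, b.2 < b.1 := fun b hb => (hH.1 b hb).1
  have hdvd : ∀ b ∈ H, (1 - w) ∣ b.1 - b.2 + 1 := fun b hb => (hH.1 b hb).2.2
  rw [← coe_uncovered hsep hlt ha, Set.ncard_coe_finset]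
  refine ⟨(uncovered H a).finite_toSet, ?_⟩
  have hall : (1 - w) ∣ (uncovered H a).card + 2 := by
    have := dvd_sub_card_uncovered_between hsep hlt hdvd (hlt a ha) le_rfl le_rfl
      not_covered_snd not_covered_fst
    rw [Finset.filter_true_of_mem fun v hv => (mem_uncovered.1 hv).1] at this
    convert Int.dvd_sub (hdvd a ha) this using 1
    ring
  have hsmall : ((uncovered H a).card : ℤ) < 1 - w := by
    refine Finset.card_lt_of_dvd_sub_card_between (by omega) _ (fun v hv v' hv' hvv' => ?_)
      fun v hv v' hv' => hH.not_dvd_of_mem_uncovered hw ha hv hv'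
    rw [mem_uncovered] at hv hv'
    exact dvd_sub_card_uncovered_between hsep hlt hdvd hvv' hv.1.1.le hv'.1.2.le hv.2 hv'.2
  obtain ⟨c, hc⟩ := hall
  have hc1 : c = 1 := by
    have : 0 < c := by nlinarith
    have : c < 2 := by nlinarith
    omega
  rw [hc1, mul_one] at hc
  omega

end SphericalArcs
end
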